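/- Let U be a symmetric real n×n matrix with i-th column U_i and define f : ℝⁿ → ℝ by f(z) = ‖z‖²/2 − ½ Σ_{i=1}^n (max(U_iᵀz, 0))². Then for every z ∈ ℝⁿ, the gradient of f at z equals z − U·ReLU(Uz), where ReLU(t) = max(t, 0) is applied entrywise to the vector Uz. -/

import Mathlib

open scoped RealInnerProductSpace

/-- Matrix-vector multiplication on Euclidean space. -/
noncomputable def mvE {n : ℕ} (U : Matrix (Fin n) (Fin n) ℝ)
    (v : EuclideanSpace ℝ (Fin n)) : EuclideanSpace ℝ (Fin n) :=
  WithLp.toLp 2 (U.mulVec v)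

/-- Entrywise application of a scalar function to a vector. -/
noncomputable def appE {n : ℕ} (Φ : ℝ → ℝ)
    (v : EuclideanSpace ℝ (Fin n)) : EuclideanSpace ℝ (Fin n) :=
  WithLp.toLp 2 (fun i => Φ (v i))

/-!
With `Uᵢ` the `i`-th column of `U` and `Ψ t = max t 0 ^ 2 / 2`, we have
`f z = ‖z‖²/2 - ∑ᵢ Ψ ⟪Uᵢ, z⟫`. `Ψ` is differentiable everywhere with `Ψ' = ReLU`: away from `0`
it is locally `0` or `t²/2`, and at `0` this extends because `ReLU` is continuous. The chain rule
gives `∇f z = z - ∑ᵢ ReLU ⟪Uᵢ, z⟫ • Uᵢ = z - U · ReLU(Uᵀz)`, and `Uᵀ = U`.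
-/
open InnerProductSpace Filter Topology Matrix

section Gradient

variable {𝕜 F : Type*} [RCLike 𝕜] [NormedAddCommGroup F] [InnerProductSpace 𝕜 F] [CompleteSpace F]
  {f g : F → 𝕜} {f' g' x : F}

theorem HasGradientAt.sub (hf : HasGradientAt f f' x) (hg : HasGradientAt g g' x) :
    HasGradientAt (fun y => f y - g y) (f' - g') x := by
  rw [hasGradientAt_iff_hasFDerivAt, map_sub]
  exact hf.hasFDerivAt.sub hg.hasFDerivAt

theorem HasGradientAt.sum {ι : Type*} {s : Finset ι} {f : ι → F → 𝕜} {f' : ι → F}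
    (hf : ∀ i ∈ s, HasGradientAt (f i) (f' i) x) :
    HasGradientAt (fun y => ∑ i ∈ s, f i y) (∑ i ∈ s, f' i) x := by
  rw [hasGradientAt_iff_hasFDerivAt, map_sum]
  exact HasFDerivAt.fun_sum fun i hi => (hf i hi).hasFDerivAt

end Gradient

section RealGradient

variable {E : Type*} [NormedAddCommGroup E] [InnerProductSpace ℝ E] [CompleteSpace E]

theorem hasGradientAt_norm_sq_div_two (x : E) : HasGradientAt (fun y => ‖y‖ ^ 2 / 2) x x := by
  rw [hasGradientAt_iff_hasFDerivAt]
  simp_rw [div_eq_mul_inv]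
  refine ((hasStrictFDerivAt_norm_sq x).hasFDerivAt.mul_const _).congr_fderiv ?_
  ext y
  simp

theorem HasDerivAt.hasGradientAt_comp_inner {Ψ : ℝ → ℝ} {φ : ℝ} (c : E) {x : E}
    (hΨ : HasDerivAt Ψ φ ⟪c, x⟫) : HasGradientAt (fun y => Ψ ⟪c, y⟫) (φ • c) x := by
  rw [hasGradientAt_iff_hasFDerivAt, map_smul]
  exact hΨ.comp_hasFDerivAt x (innerSL ℝ c).hasFDerivAt

theorem hasGradientAt_norm_sq_div_two_sub_sum {ι : Type*} [Fintype ι] {Ψ Φ : ℝ → ℝ}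
    (c : ι → E) (x : E) (hΨ : ∀ i, HasDerivAt Ψ (Φ ⟪c i, x⟫) ⟪c i, x⟫) :
    HasGradientAt (fun y => ‖y‖ ^ 2 / 2 - ∑ i, Ψ ⟪c i, y⟫) (x - ∑ i, Φ ⟪c i, x⟫ • c i) x :=
  (hasGradientAt_norm_sq_div_two x).sub
    (HasGradientAt.sum fun i _ => (hΨ i).hasGradientAt_comp_inner (c i))

end RealGradient

theorem hasDerivAt_max_zero_sq_div_two (x : ℝ) :
    HasDerivAt (fun t => max t 0 ^ 2 / 2) (max x 0) x := by
  refine hasDerivAt_of_hasDerivAt_of_ne' (g := fun t => max t 0) (x := 0) (fun y hy => ?_)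
    (by fun_prop) (by fun_prop) x
  rcases hy.lt_or_gt with hy | hy
  · have hloc : (fun t : ℝ => max t 0 ^ 2 / 2) =ᶠ[𝓝 y] fun _ => 0 := by
      filter_upwards [Iio_mem_nhds hy] with t ht
      simp [max_eq_right (Set.mem_Iio.mp ht).le]
    simpa [max_eq_right hy.le] using (hasDerivAt_const y (0 : ℝ)).congr_of_eventuallyEq hloc
  · have hloc : (fun t : ℝ => max t 0 ^ 2 / 2) =ᶠ[𝓝 y] fun t => t ^ 2 / 2 := by
      filter_upwards [Ioi_mem_nhds hy] with t ht
      simp [max_eq_left (Set.mem_Ioi.mp ht).le]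
    simpa [max_eq_left hy.le] using ((hasDerivAt_pow 2 y).div_const 2).congr_of_eventuallyEq hloc

theorem inner_toLp_transpose_apply {m n : Type*} [Fintype m] (U : Matrix m n ℝ) (i : n)
    (z : EuclideanSpace ℝ m) :
    ⟪WithLp.toLp 2 (Uᵀ i), z⟫ = ∑ j, U j i * z j := by
  simp [EuclideanSpace.inner_eq_star_dotProduct, dotProduct, mul_comm]

theorem sum_smul_toLp_transpose {m n : Type*} [Fintype n] (U : Matrix m n ℝ) (a : n → ℝ) :
    ∑ i, a i • WithLp.toLp 2 (Uᵀ i) = WithLp.toLp 2 (U *ᵥ a) := by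
  ext j
  simp [Matrix.mulVec, dotProduct, mul_comm]

theorem relu_gradient_general (n : ℕ)
    (U : Matrix (Fin n) (Fin n) ℝ) (hU : U.IsSymm)
    (f : EuclideanSpace ℝ (Fin n) → ℝ)
    (hf : ∀ z : EuclideanSpace ℝ (Fin n),
      f z = ‖z‖ ^ 2 / 2 - (1 / 2) * ∑ i, max (∑ j, U j i * z j) 0 ^ 2)
    (z : EuclideanSpace ℝ (Fin n)) :
    HasGradientAt f (z - mvE U (appE (fun t => max t 0) (mvE U z))) z := by
  set c : Fin n → EuclideanSpace ℝ (Fin n) := fun i => WithLp.toLp 2 (Uᵀ i)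
  have hf_inner : f = fun y => ‖y‖ ^ 2 / 2 - ∑ i, max ⟪c i, y⟫ 0 ^ 2 / 2 := by
    funext y
    simp only [hf, c, inner_toLp_transpose_apply, Finset.mul_sum]
    ring_nf
  have hUz : ∀ i, ⟪c i, z⟫ = mvE U z i := fun i => by
    rw [inner_toLp_transpose_apply, mvE, PiLp.toLp_apply, Matrix.mulVec, dotProduct]
    exact Finset.sum_congr rfl fun j _ => by rw [hU.apply]
  have key := hasGradientAt_norm_sq_div_two_sub_sum (Φ := fun t => max t 0) c z
    fun i => hasDerivAt_max_zero_sq_div_two _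
  rw [hf_inner]
  convert key using 2
  simp only [c, sum_smul_toLp_transpose, hUz, mvE, appE]

/-- for symmetric `U` and
`f(z) = ‖z‖²/2 − ½∑ᵢ (max(Uᵢᵀz, 0))²`, the gradient of `f` at any `z` equals
`z − U·ReLU(Uz)`, where `ReLU(t) = max(t, 0)` is applied entrywise. -/
theorem relu_gradient (n : ℕ) (hn : 0 < n)
    (U : Matrix (Fin n) (Fin n) ℝ) (hU : U.IsSymm)
    (f : EuclideanSpace ℝ (Fin n) → ℝ)
    (hf : ∀ z : EuclideanSpace ℝ (Fin n),
      f z = ‖z‖ ^ 2 / 2 - (1 / 2) * ∑ i, max (∑ j, U j i * z j) 0 ^ 2)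
    (z : EuclideanSpace ℝ (Fin n)) :
    HasGradientAt f (z - mvE U (appE (fun t => max t 0) (mvE U z))) z :=
  relu_gradient_general n U hU f hf z
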